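/- Let n ≥ 1, δ ∈ ℝ, and a = (a₁, …, aₙ) ∈ ℝⁿ. For p = (t,z) ∈ ℝ×ℂⁿ put ξ_p = (δ, 1, (i a₁ z₁, …, i aₙ zₙ)) ∈ ℝ⊕ℝ⊕ℂⁿ. Then g_p(ξ_p, ξ_p) = (2δ/(n+2))·(1 + Σ_{j=1}^n a_j|z_j|²) + Σ_{j=1}^n a_j²|z_j|², and g_p(ξ_p, ξ_p) = 0 for every p = (t,z) ∈ ℝ×ℂⁿ if and only if δ = 0 and a₁ = ⋯ = aₙ = 0 (i.e., the induced conformal vector field is lightlike everywhere if and only if it is the characteristic field of the contact form). -/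
import Mathlib


open Complex

/-- The standard Hermitian inner product `⟨z,w⟩_ℂ = Σ conj(z_j) w_j` on `ℂⁿ`. -/
noncomputable def hprod {n : ℕ} (z w : Fin n → ℂ) : ℂ :=
  ∑ j, (starRingEnd ℂ) (z j) * w j

/-- The Fefferman–Lorentz metric `g_𝒩 = (1/(n+2)) dt ⊙ ω_𝒩 + Σ |dz_j|²` at the point
`p = (t, z)`, as a symmetric bilinear form on `ℝ ⊕ ℝ ⊕ ℂⁿ`. -/
noncomputable def gMet (n : ℕ) (p : ℝ × (Fin n → ℂ))
    (v v' : ℝ × ℝ × (Fin n → ℂ)) : ℝ :=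
  (1 / (n + 2)) * (v.1 * (v'.2.1 + (hprod p.2 v'.2.2).im)
      + v'.1 * (v.2.1 + (hprod p.2 v.2.2).im))
    + (hprod v.2.2 v'.2.2).re

/-- The vector field `ξ_p = (δ, 1, (i a₁ z₁, …, i aₙ zₙ))` induced by a one-parameter group
of Heisenberg-rotation type with lightlike `S¹`-component `δ`. -/
noncomputable def xiRotField (n : ℕ) (δ : ℝ) (a : Fin n → ℝ) (p : ℝ × (Fin n → ℂ)) :
    ℝ × ℝ × (Fin n → ℂ) :=
  (δ, 1, fun j => Complex.I * (a j : ℂ) * p.2 j)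

/-- `g_p(ξ_p, ξ_p) = (2δ/(n+2))(1 + Σ a_j |z_j|²) + Σ a_j² |z_j|²`, and the induced conformal
vector field is lightlike everywhere iff `δ = 0` and `a₁ = ⋯ = aₙ = 0` (i.e. iff it is the
characteristic field of the contact form). -/
theorem xiRotField_lightlike_iff (n : ℕ) (hn : 1 ≤ n) (δ : ℝ) (a : Fin n → ℝ) :
    (∀ p : ℝ × (Fin n → ℂ),
      gMet n p (xiRotField n δ a p) (xiRotField n δ a p) =
        (2 * δ / (n + 2)) * (1 + ∑ j, a j * Complex.normSq (p.2 j))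
          + ∑ j, a j ^ 2 * Complex.normSq (p.2 j)) ∧
    ((∀ p : ℝ × (Fin n → ℂ),
        gMet n p (xiRotField n δ a p) (xiRotField n δ a p) = 0) ↔
      (δ = 0 ∧ ∀ j, a j = 0)) := by
  have key : ∀ p : ℝ × (Fin n → ℂ),
      gMet n p (xiRotField n δ a p) (xiRotField n δ a p) =
        (2 * δ / (n + 2)) * (1 + ∑ j, a j * Complex.normSq (p.2 j))
          + ∑ j, a j ^ 2 * Complex.normSq (p.2 j) := by
    rintro ⟨t, z⟩
    simp only [gMet, xiRotField, hprod]
    have e1 : (∑ j, (starRingEnd ℂ) (z j) * (Complex.I * (a j : ℂ) * z j)).im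
        = ∑ j, a j * Complex.normSq (z j) := by
      rw [Complex.im_sum]
      refine Finset.sum_congr rfl fun j _ => ?_
      simp [Complex.mul_im, Complex.mul_re, Complex.normSq_apply]
      ring
    have e2 : (∑ j, (starRingEnd ℂ) (Complex.I * (a j : ℂ) * z j)
          * (Complex.I * (a j : ℂ) * z j)).re
        = ∑ j, a j ^ 2 * Complex.normSq (z j) := by
      rw [Complex.re_sum]
      refine Finset.sum_congr rfl fun j _ => ?_
      simp [Complex.mul_im, Complex.mul_re, Complex.normSq_apply]
      ring
    simp only [e1, e2]
    have hne : (n : ℝ) + 2 ≠ 0 := by positivity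
    field_simp
    ring
  refine ⟨key, ?_, ?_⟩
  · intro h
    have hnpos : (0:ℝ) < (n : ℝ) + 2 := by positivity
    have hne : (n : ℝ) + 2 ≠ 0 := by positivity
    have hδ : δ = 0 := by
      have h0 := (key (0, 0)).symm.trans (h (0, 0))
      simp at h0
      rcases h0 with h0 | h0
      · exact h0
      · exact absurd h0 hne
    refine ⟨hδ, fun j => ?_⟩
    have hj := (key (0, Pi.single j 1)).symm.trans (h (0, Pi.single j 1))
    rw [hδ] at hj
    simp only [mul_zero, zero_mul, zero_div, zero_add, Pi.single_apply,
      apply_ite Complex.normSq, Complex.normSq_one, Complex.normSq_zero, mul_ite, mul_one,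
      mul_zero, Finset.sum_ite_eq', Finset.mem_univ, if_true] at hj
    exact pow_eq_zero_iff (two_ne_zero) |>.mp hj
  · rintro ⟨hδ, ha⟩ p
    rw [key p]
    simp [hδ, ha]
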